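/- Let r' ≥ 2 and write ρ_{r'}(x) = 1 + |x|^{r'}. There exists a constant C ≥ 0 depending only on d and r' such that for every mesh size δ > 0 and every box subgrid Π of δℤ^d whose convex hull Box contains 0: sup_{x∈ℝ^d} Pρ_{r'}(x)/ρ_{r'}(x) ≤ 1 + C·δ²·(1 + δ^{r'}), where Pρ_{r'} is the interpolation of the restriction of ρ_{r'} to Π. -/

import Mathlib

noncomputable section

/-- The grid point `δ·k` of `δℤ^d`, viewed in `ℝ^d`. -/
def gridPt (d : ℕ) (δ : ℝ) (k : Fin d → ℤ) : EuclideanSpace ℝ (Fin d) :=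
  WithLp.toLp 2 (fun i => δ * k i)

/-- The metric projection of `x ∈ ℝ^d` onto the closed convex box
`Box = ∏_i [δ m_i, δ M_i]` (for the Euclidean norm it is the coordinatewise clamp). -/
def boxProj (d : ℕ) (δ : ℝ) (mlo Mhi : Fin d → ℤ) (x : EuclideanSpace ℝ (Fin d)) :
    EuclideanSpace ℝ (Fin d) :=
  WithLp.toLp 2 (fun i => max (δ * mlo i) (min (x i) (δ * Mhi i)))

/-- The hat basis function `ψ_z(x) = ∏_i max(0, 1 − |x_i − z_i|/δ)`. -/
def hatFn (d : ℕ) (δ : ℝ) (z x : EuclideanSpace ℝ (Fin d)) : ℝ :=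
  ∏ i, max 0 (1 - |x i - z i| / δ)

/-- The multilinear interpolation operator
`Pφ(x) = Σ_{z∈Π} ψ_z(Proj(x, Box)) φ(z)` on the box subgrid `Π = {δk : m ≤ k ≤ M}`. -/
def interp {E : Type*} [AddCommGroup E] [Module ℝ E]
    (d : ℕ) (δ : ℝ) (mlo Mhi : Fin d → ℤ)
    (φ : EuclideanSpace ℝ (Fin d) → E) (x : EuclideanSpace ℝ (Fin d)) : E :=
  ∑ k ∈ Finset.Icc mlo Mhi,
    hatFn d δ (gridPt d δ k) (boxProj d δ mlo Mhi x) • φ (gridPt d δ k)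

/-!
Write `p = Proj(x, Box)`. The weights `ψ_z(p)`, `z ∈ Π`, are products of one-dimensional hat
functions; on each axis only the two grid neighbours of `p i` carry weight, so the weights are
nonnegative, sum to one and reproduce affine functions, whence `∑ ψ_z(p) z = p`. Moreover
`ψ_z(p) ≠ 0` forces `|z - p| ≤ √d δ`. Averaging the second-order bound
`|p + h|^r ≤ |p|^r + r |p|^(r-2) ⟪p, h⟫ + r² |h|² (|p| + |h|)^(r-2)` over `h = z - p` kills the
first-order term and gives `Pρ(x) ≤ 1 + |p|^r + r² d δ² (|p| + √d δ)^(r-2)`. Finally `|p| ≤ |x|`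
because `0 ∈ Box`, and `(|x| + √d δ)^(r-2) ≤ C (1 + |x|^r) (1 + δ^r)`.
-/

open Real Finset

lemma rpow_sub_rpow_le_mul_sub {q x y : ℝ} (hq : 1 ≤ q) (hx : 0 ≤ x) (hy : 0 ≤ y) :
    x ^ q - y ^ q ≤ q * x ^ (q - 1) * (x - y) := by
  rcases hx.eq_or_lt with rfl | hx
  · rcases hq.eq_or_lt with rfl | hq
    · simp
    · rw [zero_rpow (by linarith), zero_rpow (by linarith)]
      simp [rpow_nonneg hy]
  · have hB := one_add_mul_self_le_rpow_one_add (by linarith [div_nonneg hy hx.le] :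
      -1 ≤ y / x - 1) hq
    rw [add_sub_cancel, div_rpow hy hx.le] at hB
    have hxq : x ^ q = x ^ (q - 1) * x := by
      rw [← rpow_add_one hx.ne', sub_add_cancel]
    rw [le_div_iff₀ (rpow_pos_of_pos hx q)] at hB
    have : x ^ q * (y / x - 1) = x ^ (q - 1) * (y - x) := by
      rw [hxq]; field_simp
    nlinarith

lemma rpow_sub_rpow_le_mul_sq_sub_sq {r x y : ℝ} (hr : 2 ≤ r) (hx : 0 ≤ x) (hy : 0 ≤ y) :
    x ^ r - y ^ r ≤ r / 2 * x ^ (r - 2) * (x ^ 2 - y ^ 2) := by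
  have hsq : ∀ {t : ℝ}, 0 ≤ t → ∀ s : ℝ, (t ^ 2) ^ (s / 2) = t ^ s := fun ht s => by
    rw [← rpow_natCast_mul ht]; congr 1; push_cast; ring
  have h := rpow_sub_rpow_le_mul_sub (q := r / 2) (by linarith) (sq_nonneg x) (sq_nonneg y)
  rwa [hsq hx, hsq hy, show r / 2 - 1 = (r - 2) / 2 by ring, hsq hx] at h

lemma rpow_sub_rpow_mul_sub_le {s x y : ℝ} (hs : 0 ≤ s) (hy : 0 ≤ y) (hyx : y ≤ x) :
    (x ^ s - y ^ s) * x ≤ (1 + s) * (x - y) * x ^ s := by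
  have hx : 0 ≤ x := hy.trans hyx
  have h := rpow_sub_rpow_le_mul_sub (q := s + 1) (by linarith) hx hy
  rw [rpow_add_one' hx (by linarith), rpow_add_one' hy (by linarith), add_sub_cancel_right] at h
  nlinarith [rpow_nonneg hy s]

lemma rpow_sub_rpow_mul_sq_sub_sq_le {s x y : ℝ} (hs : 0 ≤ s) (hx : 0 ≤ x) (hy : 0 ≤ y) :
    (x ^ s - y ^ s) * (x ^ 2 - y ^ 2) ≤ 2 * (1 + s) * (x - y) ^ 2 * max x y ^ s := by
  wlog hyx : y ≤ x generalizing x y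
  · have := this hy hx (by linarith)
    rw [max_comm]; nlinarith
  have h := rpow_sub_rpow_mul_sub_le hs hy hyx
  have hmono : y ^ s ≤ x ^ s := rpow_le_rpow hy hyx hs
  rw [max_eq_left hyx]
  nlinarith [mul_nonneg (sub_nonneg.2 hmono) (sub_nonneg.2 hyx)]

/-- The expansion is in the variable `y ^ 2`, so that for `y = ‖p + h‖` the linear term
becomes `⟪p, h⟫`. -/
lemma rpow_le_taylor_sq {r x y : ℝ} (hr : 2 ≤ r) (hx : 0 ≤ x) (hy : 0 ≤ y) :
    y ^ r ≤ x ^ r + r / 2 * x ^ (r - 2) * (y ^ 2 - x ^ 2)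
      + r * (r - 1) * (y - x) ^ 2 * max x y ^ (r - 2) := by
  have h1 := rpow_sub_rpow_le_mul_sq_sub_sq hr hy hx
  have h2 := rpow_sub_rpow_mul_sq_sub_sq_le (s := r - 2) (by linarith) hy hx
  rw [max_comm] at h2
  nlinarith

lemma norm_add_rpow_le {E : Type*} [NormedAddCommGroup E] [InnerProductSpace ℝ E] {r : ℝ}
    (hr : 2 ≤ r) (p h : E) :
    ‖p + h‖ ^ r ≤ ‖p‖ ^ r + r * ‖p‖ ^ (r - 2) * inner ℝ p h
      + r ^ 2 * ‖h‖ ^ 2 * (‖p‖ + ‖h‖) ^ (r - 2) := by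
  have hT := rpow_le_taylor_sq hr (norm_nonneg p) (norm_nonneg (p + h))
  have hsq : ‖p + h‖ ^ 2 - ‖p‖ ^ 2 = 2 * inner ℝ p h + ‖h‖ ^ 2 := by
    rw [norm_add_sq_real]; ring
  have hdiff : (‖p + h‖ - ‖p‖) ^ 2 ≤ ‖h‖ ^ 2 := by
    rw [← sq_abs]
    gcongr
    simpa using abs_norm_sub_norm_le (p + h) p
  have hK₁ : ‖p‖ ^ (r - 2) ≤ (‖p‖ + ‖h‖) ^ (r - 2) := by
    gcongr
    exact le_add_of_nonneg_right (norm_nonneg h)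
  have hK₂ : max ‖p‖ ‖p + h‖ ^ (r - 2) ≤ (‖p‖ + ‖h‖) ^ (r - 2) := by
    gcongr
    exact max_le (le_add_of_nonneg_right (norm_nonneg h)) (norm_add_le p h)
  rw [hsq] at hT
  have hK₀ : 0 ≤ (‖p‖ + ‖h‖) ^ (r - 2) := by positivity
  calc ‖p + h‖ ^ r
      ≤ ‖p‖ ^ r + r * ‖p‖ ^ (r - 2) * inner ℝ p h + r / 2 * ‖h‖ ^ 2 * ‖p‖ ^ (r - 2)
        + r * (r - 1) * (‖p + h‖ - ‖p‖) ^ 2 * max ‖p‖ ‖p + h‖ ^ (r - 2) := by linarith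
    _ ≤ ‖p‖ ^ r + r * ‖p‖ ^ (r - 2) * inner ℝ p h + r / 2 * ‖h‖ ^ 2 * (‖p‖ + ‖h‖) ^ (r - 2)
        + r * (r - 1) * ‖h‖ ^ 2 * (‖p‖ + ‖h‖) ^ (r - 2) := by
      have : 0 ≤ r * (r - 1) := by nlinarith
      gcongr
    _ ≤ _ := by
      have : 0 ≤ ‖h‖ ^ 2 * (‖p‖ + ‖h‖) ^ (r - 2) := by positivity
      nlinarith

lemma one_add_rpow_le_two_rpow_mul {r t : ℝ} (hr : 0 ≤ r) (ht : 0 ≤ t) :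
    (1 + t) ^ r ≤ 2 ^ r * (1 + t ^ r) := by
  rcases le_total t 1 with h | h
  · calc (1 + t) ^ r ≤ 2 ^ r := by gcongr; linarith
      _ ≤ 2 ^ r * (1 + t ^ r) := by
        have := rpow_nonneg ht r; have := rpow_nonneg (zero_le_two (α := ℝ)) r; nlinarith
  · calc (1 + t) ^ r ≤ (2 * t) ^ r := by gcongr; linarith
      _ = 2 ^ r * t ^ r := mul_rpow zero_le_two ht
      _ ≤ 2 ^ r * (1 + t ^ r) := by gcongr; linarith

lemma add_mul_rpow_sub_two_le {r X c t : ℝ} (hr : 2 ≤ r) (hX : 0 ≤ X) (hc : 0 ≤ c)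
    (ht : 0 ≤ t) :
    (X + c * t) ^ (r - 2) ≤ (1 + c) ^ r * 4 ^ r * (1 + X ^ r) * (1 + t ^ r) := by
  have hexpand : (1 + c) * (1 + X) * (1 + t)
      = 1 + X + c * t + (c + t + c * X + X * t + c * X * t) := by ring
  have hrest : 0 ≤ c + t + c * X + X * t + c * X * t := by positivity
  have hbase : X + c * t ≤ (1 + c) * (1 + X) * (1 + t) := by linarith
  have hone : 1 ≤ (1 + c) * (1 + X) * (1 + t) := by nlinarith [mul_nonneg hc ht]
  calc (X + c * t) ^ (r - 2) ≤ ((1 + c) * (1 + X) * (1 + t)) ^ (r - 2) := by gcongr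
    _ ≤ ((1 + c) * (1 + X) * (1 + t)) ^ r := rpow_le_rpow_of_exponent_le hone (by linarith)
    _ = (1 + c) ^ r * (1 + X) ^ r * (1 + t) ^ r := by
      rw [mul_rpow (by positivity) (by positivity), mul_rpow (by positivity) (by positivity)]
    _ ≤ (1 + c) ^ r * (2 ^ r * (1 + X ^ r)) * (2 ^ r * (1 + t ^ r)) := by
      gcongr <;> exact one_add_rpow_le_two_rpow_mul (by linarith) ‹_›
    _ = (1 + c) ^ r * 4 ^ r * (1 + X ^ r) * (1 + t ^ r) := by
      rw [show (4 : ℝ) = 2 * 2 by norm_num, mul_rpow zero_le_two zero_le_two]; ring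

lemma sum_mul_le_of_le_linear_add {ι E : Type*} [AddCommGroup E] [Module ℝ E] {s : Finset ι}
    {w : ι → ℝ} {z : ι → E} {p : E} {f : E → ℝ} (L : E →ₗ[ℝ] ℝ) {R : ℝ}
    (hw₀ : ∀ k ∈ s, 0 ≤ w k) (hw₁ : ∑ k ∈ s, w k = 1) (hwz : ∑ k ∈ s, w k • z k = p)
    (hf : ∀ k ∈ s, w k ≠ 0 → f (z k) ≤ f p + L (z k - p) + R) :
    ∑ k ∈ s, w k * f (z k) ≤ f p + R := by
  have hL : ∑ k ∈ s, w k * L (z k - p) = 0 := by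
    simp_rw [← smul_eq_mul, ← map_smul, ← map_sum, smul_sub, sum_sub_distrib, hwz, ← sum_smul,
      hw₁, one_smul, sub_self, map_zero]
  calc ∑ k ∈ s, w k * f (z k) ≤ ∑ k ∈ s, w k * (f p + L (z k - p) + R) := by
        refine sum_le_sum fun k hk => ?_
        rcases (hw₀ k hk).eq_or_lt with h | h
        · simp [← h]
        · exact mul_le_mul_of_nonneg_left (hf k hk h.ne') h.le
    _ = (f p + R) * ∑ k ∈ s, w k + ∑ k ∈ s, w k * L (z k - p) := by
        rw [mul_sum, ← sum_add_distrib]; congr 1 with k; ring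
    _ = f p + R := by rw [hw₁, hL]; ring

lemma abs_sub_mul_div_of_pos {δ y : ℝ} (hδ : 0 < δ) (j : ℝ) :
    |y - δ * j| / δ = |y / δ - j| := by
  rw [div_eq_iff hδ.ne', ← abs_of_pos hδ, ← abs_mul, abs_of_pos hδ]
  congr 1; field_simp

lemma sum_hat_mul_affineMap {δ y : ℝ} (hδ : 0 < δ) {m M : ℤ} (hm : δ * m ≤ y) (hM : y ≤ δ * M)
    (g : ℝ →ᵃ[ℝ] ℝ) :
    ∑ j ∈ Icc m M, max 0 (1 - |y - δ * j| / δ) * g (δ * j) = g y := by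
  set t := y / δ
  set n := ⌊t⌋
  have hθ₀ := Int.fract_nonneg t
  have hθ₁ := Int.fract_lt_one t
  have hn : (n : ℝ) + Int.fract t = t := Int.floor_add_fract t
  have hmt : (m : ℝ) ≤ t := by rw [le_div_iff₀ hδ]; linarith
  have htM : t ≤ M := by rw [div_le_iff₀ hδ]; linarith
  have hw : ∀ j : ℤ, max 0 (1 - |y - δ * j| / δ) = max 0 (1 - |t - j|) := fun j => by
    rw [abs_sub_mul_div_of_pos hδ]
  have hwn : max 0 (1 - |t - n|) = 1 - Int.fract t := by
    rw [show t - n = Int.fract t by linarith, abs_of_nonneg hθ₀, max_eq_right (by linarith)]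
  have hwn1 : max 0 (1 - |t - ↑(n + 1)|) = Int.fract t := by
    rw [show t - ↑(n + 1) = Int.fract t - 1 by push_cast; linarith,
      abs_of_nonpos (by linarith), max_eq_right (by linarith)]
    ring
  have hw0 : ∀ j : ℤ, j ≠ n → j ≠ n + 1 → max 0 (1 - |t - j|) = 0 := by
    intro j h1 h2
    refine max_eq_left (sub_nonpos.2 ?_)
    rcases lt_or_gt_of_ne h1 with h | h
    · have : (j : ℝ) + 1 ≤ n := by exact_mod_cast h
      rw [abs_of_nonneg (by linarith)]; linarith
    · have : (n : ℝ) + 2 ≤ j := by exact_mod_cast (by omega : n + 2 ≤ j)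
      rw [abs_of_nonpos (by linarith)]; linarith
  have hnm : m ≤ n := Int.le_floor.2 hmt
  have hnM : n ≤ M := Int.cast_le.1 ((Int.floor_le t).trans htM)
  -- The sum is `g` at the convex combination `(1 - fract t) • δn + fract t • δ(n + 1) = y`.
  simp_rw [hw]
  rw [sum_eq_add n (n + 1) (by omega)]
  · rw [hwn, hwn1, ← AffineMap.lineMap_apply_ring, ← AffineMap.apply_lineMap,
      AffineMap.lineMap_apply_ring']
    have hδt : δ * t = y := mul_div_cancel₀ y hδ.ne'
    congr 1
    push_cast
    linear_combination δ * hn + hδt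
  · intro j _ hj
    rw [hw0 j hj.1 hj.2, zero_mul]
  · exact fun h => absurd (mem_Icc.2 ⟨hnm, hnM⟩) h
  · intro h
    have hMn : (M : ℝ) ≤ n := by
      simp only [mem_Icc, not_and_or, not_le] at h
      exact_mod_cast (by omega : M ≤ n)
    rw [hwn1, show Int.fract t = 0 by linarith, zero_mul]

section Grid

variable {d : ℕ} {δ : ℝ} {mlo Mhi : Fin d → ℤ}

lemma hatFn_nonneg (z x : EuclideanSpace ℝ (Fin d)) : 0 ≤ hatFn d δ z x :=
  prod_nonneg fun _ _ => le_max_left _ _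

lemma norm_sub_le_of_hatFn_ne_zero (hδ : 0 < δ) {z x : EuclideanSpace ℝ (Fin d)}
    (h : hatFn d δ z x ≠ 0) : ‖z - x‖ ≤ √d * δ := by
  have hcoord : ∀ i, |z i - x i| ≤ δ := by
    intro i
    by_contra! hi
    refine h (prod_eq_zero (mem_univ i) (max_eq_left ?_))
    rw [sub_nonpos, one_le_div hδ, abs_sub_comm]
    exact hi.le
  rw [EuclideanSpace.norm_eq, ← sqrt_sq hδ.le, ← sqrt_mul (Nat.cast_nonneg d)]
  gcongr
  calc ∑ i, ‖(z - x) i‖ ^ 2 ≤ ∑ _i : Fin d, δ ^ 2 := by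
        gcongr with i
        rw [Real.norm_eq_abs, PiLp.sub_apply]
        exact hcoord i
    _ = d * δ ^ 2 := by simp

lemma sum_hatFn_mul_prod (hδ : 0 < δ) {p : EuclideanSpace ℝ (Fin d)}
    (hp : ∀ i, δ * mlo i ≤ p i ∧ p i ≤ δ * Mhi i)
    (g : Fin d → ℝ →ᵃ[ℝ] ℝ) :
    ∑ k ∈ Icc mlo Mhi, hatFn d δ (gridPt d δ k) p * ∏ i, g i (δ * k i) = ∏ i, g i (p i) := by
  simp_rw [hatFn, gridPt, ← prod_mul_distrib]
  rw [Pi.Icc_eq, ← prod_univ_sum _ fun i (j : ℤ) => max 0 (1 - |p i - δ * j| / δ) * g i (δ * j)]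
  exact prod_congr rfl fun i _ => sum_hat_mul_affineMap hδ (hp i).1 (hp i).2 (g i)

lemma sum_hatFn (hδ : 0 < δ) {p : EuclideanSpace ℝ (Fin d)}
    (hp : ∀ i, δ * mlo i ≤ p i ∧ p i ≤ δ * Mhi i) :
    ∑ k ∈ Icc mlo Mhi, hatFn d δ (gridPt d δ k) p = 1 := by
  simpa using sum_hatFn_mul_prod hδ hp fun _ => AffineMap.const ℝ ℝ 1

lemma sum_hatFn_smul_gridPt (hδ : 0 < δ) {p : EuclideanSpace ℝ (Fin d)}
    (hp : ∀ i, δ * mlo i ≤ p i ∧ p i ≤ δ * Mhi i) :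
    ∑ k ∈ Icc mlo Mhi, hatFn d δ (gridPt d δ k) p • gridPt d δ k = p := by
  ext i
  set g : Fin d → ℝ →ᵃ[ℝ] ℝ := fun j => if j = i then AffineMap.id ℝ ℝ else AffineMap.const ℝ ℝ 1
  have hg : ∀ j t, g j t = if j = i then t else 1 := fun j t => by
    by_cases h : j = i <;> simp [g, h]
  have := sum_hatFn_mul_prod hδ hp g
  simp only [hg, Fintype.prod_ite_eq'] at this
  simpa [gridPt] using this

lemma boxProj_mem (h : ∀ i, δ * mlo i ≤ δ * Mhi i) (x : EuclideanSpace ℝ (Fin d)) (i : Fin d) :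
    δ * mlo i ≤ boxProj d δ mlo Mhi x i ∧ boxProj d δ mlo Mhi x i ≤ δ * Mhi i := by
  simp only [boxProj, PiLp.toLp_apply]
  exact ⟨le_max_left _ _, max_le (h i) (min_le_right _ _)⟩

lemma norm_boxProj_le (h : ∀ i, δ * mlo i ≤ 0 ∧ 0 ≤ δ * Mhi i) (x : EuclideanSpace ℝ (Fin d)) :
    ‖boxProj d δ mlo Mhi x‖ ≤ ‖x‖ := by
  simp only [EuclideanSpace.norm_eq, Real.norm_eq_abs]
  refine sqrt_le_sqrt (sum_le_sum fun i _ => pow_le_pow_left₀ (abs_nonneg _) ?_ 2)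
  have := h i
  simp only [boxProj]
  grind

lemma interp_add {E : Type*} [AddCommGroup E] [Module ℝ E] (φ ψ : EuclideanSpace ℝ (Fin d) → E)
    (x : EuclideanSpace ℝ (Fin d)) :
    interp d δ mlo Mhi (fun y => φ y + ψ y) x
      = interp d δ mlo Mhi φ x + interp d δ mlo Mhi ψ x := by
  simp only [interp, smul_add, sum_add_distrib]

lemma interp_const {E : Type*} [AddCommGroup E] [Module ℝ E] (hδ : 0 < δ)
    (hbox : ∀ i, δ * mlo i ≤ δ * Mhi i) (c : E) (x : EuclideanSpace ℝ (Fin d)) :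
    interp d δ mlo Mhi (fun _ => c) x = c := by
  rw [interp, ← sum_smul, sum_hatFn hδ (boxProj_mem hbox x), one_smul]

lemma interp_norm_rpow_le {r : ℝ} (hδ : 0 < δ) (hbox : ∀ i, δ * mlo i ≤ δ * Mhi i) (hr : 2 ≤ r)
    (x : EuclideanSpace ℝ (Fin d)) :
    interp d δ mlo Mhi (fun y => ‖y‖ ^ r) x ≤ ‖boxProj d δ mlo Mhi x‖ ^ r
      + r ^ 2 * (d * δ ^ 2) * (‖boxProj d δ mlo Mhi x‖ + √d * δ) ^ (r - 2) := by
  set p := boxProj d δ mlo Mhi x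
  have hp := boxProj_mem hbox x
  simp only [interp, smul_eq_mul]
  refine sum_mul_le_of_le_linear_add (f := fun y => ‖y‖ ^ r) ((r * ‖p‖ ^ (r - 2)) • innerₛₗ ℝ p)
    (fun k _ => hatFn_nonneg _ _) (sum_hatFn hδ hp)
    (sum_hatFn_smul_gridPt hδ hp) fun k _ hk => ?_
  have hb := norm_sub_le_of_hatFn_ne_zero hδ hk
  have hT := norm_add_rpow_le hr p (gridPt d δ k - p)
  rw [add_sub_cancel] at hT
  have hb2 : ‖gridPt d δ k - p‖ ^ 2 ≤ d * δ ^ 2 := by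
    calc _ ≤ (√d * δ) ^ 2 := by gcongr
      _ = d * δ ^ 2 := by rw [mul_pow, sq_sqrt (Nat.cast_nonneg d)]
  refine hT.trans ?_
  simp only [LinearMap.smul_apply, innerₛₗ_apply_apply, smul_eq_mul]
  have : 0 ≤ r - 2 := by linarith
  gcongr

end Grid

theorem interp_rho_ratio_bound_general
    (d : ℕ) (r' : ℝ) (hr' : 2 ≤ r') :
    ∃ C : ℝ, 0 ≤ C ∧
      ∀ δ : ℝ, 0 < δ →
      ∀ mlo Mhi : Fin d → ℤ, (∀ i, mlo i ≤ Mhi i) →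
      (∀ i, δ * mlo i ≤ 0 ∧ (0:ℝ) ≤ δ * Mhi i) →
      ∀ x : EuclideanSpace ℝ (Fin d),
        interp d δ mlo Mhi (fun y => 1 + ‖y‖ ^ r') x / (1 + ‖x‖ ^ r')
          ≤ 1 + C * δ ^ 2 * (1 + δ ^ r') := by
  refine ⟨r' ^ 2 * d * ((1 + √d) ^ r' * 4 ^ r'), by positivity, fun δ hδ mlo Mhi _ h0 x => ?_⟩
  have hbox : ∀ i, δ * mlo i ≤ δ * Mhi i := fun i => (h0 i).1.trans (h0 i).2
  have hpx := norm_boxProj_le h0 x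
  have hgrowth := add_mul_rpow_sub_two_le hr' (norm_nonneg x) (sqrt_nonneg d) hδ.le
  rw [interp_add, interp_const hδ hbox, div_le_iff₀ (by positivity)]
  calc 1 + interp d δ mlo Mhi (fun y => ‖y‖ ^ r') x
      ≤ 1 + (‖x‖ ^ r' + r' ^ 2 * (d * δ ^ 2) * (‖x‖ + √d * δ) ^ (r' - 2)) := by
        have hr₀ : 0 ≤ r' - 2 := by linarith
        grw [interp_norm_rpow_le hδ hbox hr' x, hpx]
    _ ≤ 1 + (‖x‖ ^ r' + r' ^ 2 * (d * δ ^ 2)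
          * ((1 + √d) ^ r' * 4 ^ r' * (1 + ‖x‖ ^ r') * (1 + δ ^ r'))) := by gcongr
    _ = _ := by ring

/-- For `r' ≥ 2`, `ρ_{r'}(x) = 1 + |x|^{r'}`, there is a constant `C ≥ 0` depending only on
`d` and `r'` such that for every mesh size `δ > 0` and every box subgrid of `δℤ^d` whose
convex hull contains `0`, `sup_{x∈ℝ^d} Pρ_{r'}(x)/ρ_{r'}(x) ≤ 1 + C δ² (1 + δ^{r'})`. -/
theorem interp_rho_ratio_bound
    (d : ℕ) (hd : 1 ≤ d) (r' : ℝ) (hr' : 2 ≤ r') :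
    ∃ C : ℝ, 0 ≤ C ∧
      ∀ δ : ℝ, 0 < δ →
      ∀ mlo Mhi : Fin d → ℤ, (∀ i, mlo i ≤ Mhi i) →
      (∀ i, δ * mlo i ≤ 0 ∧ (0:ℝ) ≤ δ * Mhi i) →
      ∀ x : EuclideanSpace ℝ (Fin d),
        interp d δ mlo Mhi (fun y => 1 + ‖y‖ ^ r') x / (1 + ‖x‖ ^ r')
          ≤ 1 + C * δ ^ 2 * (1 + δ ^ r') :=
  interp_rho_ratio_bound_general d r' hr'
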